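/- Let (θ_j)_{j≥1} be a non-increasing sequence of nonnegative reals satisfying the block structure: θ_{p_k+1} = … = θ_{p_k+q_k} for each k, with strict decreases between consecutive blocks, where p_{k+1} = p_k + q_k and p_1 = 0. Let (θ̂_j)_{j≥1} be another non-increasing sequence and set ε = sup_j |θ̂_j − θ_j|. Let g > 0 be the minimum gap between distinct values among θ_1, …, θ_{p_m+q_m}. If z is a threshold with 2ε < z < g − 2ε, then the threshold-based tie diagnostic (declaring j, j+1 tied iff θ̂_j − θ̂_{j+1} < z) exactly recovers the blocks among indices 1, …, p_m + q_m: it declares j and j+1 tied if and only if θ_j = θ_{j+1}. -/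
import Mathlib


/-- Exact block recovery by the threshold tie diagnostic: if eigenvalues are either tied
or separated by at least `g`, estimates are uniformly within `ε`, and the threshold
satisfies `2ε < z < g − 2ε`, then for indices below `N` consecutive estimates are
declared tied iff the true eigenvalues are equal. -/
theorem stmt17 (N : ℕ) (θ θhat : ℕ → ℝ)
    (hθmono : Antitone θ) (hθ0 : ∀ j, 0 ≤ θ j) (hθhatmono : Antitone θhat)
    (g : ℝ) (hg : 0 < g)
    (hgap : ∀ j, j + 1 < N → θ (j + 1) ≠ θ j → g ≤ θ j - θ (j + 1))
    (ε : ℝ) (hε : 0 ≤ ε) (hεbound : ∀ j, |θhat j - θ j| ≤ ε)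
    (z : ℝ) (hz1 : 2 * ε < z) (hz2 : z < g - 2 * ε) :
    ∀ j, j + 1 < N → ((θhat j - θhat (j + 1) < z) ↔ θ j = θ (j + 1)) := by
  intro j hj
  have h1 := abs_le.mp (hεbound j)
  have h2 := abs_le.mp (hεbound (j + 1))
  constructor
  · intro hlt
    by_contra hne
    have hgapj := hgap j hj (fun h => hne h.symm)
    linarith
  · intro heq
    linarith
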